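/- arXiv:2504.10988 — 5 statements merged into one kernel-verified Lean document; each statement's English description precedes it below -/
import Mathlib

section
/- Let H be a complex Hilbert space, let p and q be rank-one orthogonal projections on H (p ≠ q), and let x ∈ range(p), y ∈ range(q) satisfy ‖x + y‖ ≤ 1. Then ‖x‖ ≤ ‖p − q‖⁻¹. -/
open scoped ComplexConjugate

local notation "⟪" x ", " y "⟫" => @inner ℂ _ _ x y

/-- A rank-one self-adjoint idempotent is `z ↦ ⟪u, z⟫ • u` for a unit `u` in its range. -/
lemma aux_rank_one_proj_formula {H : Type*} [NormedAddCommGroup H] [InnerProductSpace ℂ H]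
    [CompleteSpace H] (p : H →L[ℂ] H) (hp : IsSelfAdjoint p) (hp2 : IsIdempotentElem p)
    (hr : Module.finrank ℂ (LinearMap.range (p : H →ₗ[ℂ] H)) = 1)
    (u : H) (hu : u ∈ LinearMap.range (p : H →ₗ[ℂ] H)) (hu1 : ‖u‖ = 1) (z : H) :
    p z = ⟪u, z⟫ • u := by
  have hu0 : u ≠ 0 := by intro h; rw [h] at hu1; simp at hu1
  have hu0' : (⟨u, hu⟩ : LinearMap.range (p : H →ₗ[ℂ] H)) ≠ 0 := by
    simpa [Subtype.ext_iff] using hu0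
  obtain ⟨c, hc⟩ := (finrank_eq_one_iff_of_nonzero' _ hu0').mp hr
    ⟨p z, LinearMap.mem_range_self _ z⟩
  have hc' : c • u = p z := congrArg Subtype.val hc
  have hpu : p u = u := by
    obtain ⟨w, rfl⟩ := hu
    have := DFunLike.congr_fun hp2 w
    simpa using this
  have h1 : ⟪u, p z⟫ = ⟪u, z⟫ := by
    rw [← ContinuousLinearMap.adjoint_inner_left, hp.adjoint_eq, hpu]
  have h2 : ⟪u, p z⟫ = c := by
    rw [← hc', inner_smul_right, inner_self_eq_norm_sq_to_K, hu1]
    simp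
  rw [← hc', ← h2, h1]

lemma aux_scalar_identity (a c d : ℂ) :
    ‖a - ((starRingEnd ℂ) c * a + d) * c‖ ^ 2 + ‖(starRingEnd ℂ) c * a + d‖ ^ 2 * (1 - ‖c‖ ^ 2)
      = ‖a‖ ^ 2 * (1 - ‖c‖ ^ 2) + ‖d‖ ^ 2 := by
  simp only [Complex.sq_norm, Complex.normSq_apply, Complex.sub_re,
    Complex.sub_im, Complex.add_re, Complex.add_im, Complex.mul_re, Complex.mul_im,
    Complex.conj_re, Complex.conj_im]
  ring

lemma aux_pyth {H : Type*} [NormedAddCommGroup H] [InnerProductSpace ℂ H]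
    (A B : H) (h : ⟪A, B⟫ = 0) : ‖A + B‖ ^ 2 = ‖A‖ ^ 2 + ‖B‖ ^ 2 := by
  rw [pow_two, pow_two, pow_two]
  exact norm_add_sq_eq_norm_sq_add_norm_sq_of_inner_eq_zero A B h

lemma aux_unit {H : Type*} [NormedAddCommGroup H] [InnerProductSpace ℂ H]
    (w : H) (hw : w ≠ 0) : ‖((‖w‖⁻¹ : ℝ) : ℂ) • w‖ = 1 := by
  rw [norm_smul, Complex.norm_real, norm_inv, norm_norm,
    inv_mul_cancel₀ (norm_ne_zero_iff.mpr hw)]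

set_option maxHeartbeats 1000000 in
theorem norm_le_inv_norm_sub_of_rank_one_projections
    {H : Type*} [NormedAddCommGroup H] [InnerProductSpace ℂ H] [CompleteSpace H]
    (p q : H →L[ℂ] H)
    (hp : IsSelfAdjoint p) (hp2 : IsIdempotentElem p)
    (hq : IsSelfAdjoint q) (hq2 : IsIdempotentElem q)
    (hrp : Module.finrank ℂ (LinearMap.range (p : H →ₗ[ℂ] H)) = 1)
    (hrq : Module.finrank ℂ (LinearMap.range (q : H →ₗ[ℂ] H)) = 1)
    (hpq : p ≠ q)
    (x y : H) (hx : x ∈ LinearMap.range (p : H →ₗ[ℂ] H)) (hy : y ∈ LinearMap.range (q : H →ₗ[ℂ] H))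
    (hxy : ‖x + y‖ ≤ 1) :
    ‖x‖ ≤ ‖p - q‖⁻¹ := by
  rcases eq_or_ne x 0 with rfl | hx0
  · simpa using inv_nonneg.mpr (norm_nonneg (p - q))
  have hrpos : (0:ℝ) < ‖x‖ := norm_pos_iff.mpr hx0
  -- unit vector u spanning range p, with x = ‖x‖ • u
  obtain ⟨u, humem, hu1, hxu⟩ :
      ∃ u : H, u ∈ LinearMap.range (p : H →ₗ[ℂ] H) ∧ ‖u‖ = 1 ∧ x = ((‖x‖ : ℝ) : ℂ) • u := by
    refine ⟨((‖x‖⁻¹ : ℝ) : ℂ) • x, Submodule.smul_mem _ _ hx, aux_unit x hx0, ?_⟩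
    rw [smul_smul, ← Complex.ofReal_mul, mul_inv_cancel₀ hrpos.ne']
    simp
  -- unit vector v in range q
  obtain ⟨v, hvmem, hv1⟩ : ∃ v : H, v ∈ LinearMap.range (q : H →ₗ[ℂ] H) ∧ ‖v‖ = 1 := by
    obtain ⟨v0, hv0ne, -⟩ := finrank_eq_one_iff'.mp hrq
    have hne : (v0 : H) ≠ 0 := fun h => hv0ne (by simpa using h)
    exact ⟨((‖(v0 : H)‖⁻¹ : ℝ) : ℂ) • (v0 : H), Submodule.smul_mem _ _ v0.2, aux_unit _ hne⟩
  have hpz := fun z => aux_rank_one_proj_formula p hp hp2 hrp u humem hu1 z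
  have hqz := fun z => aux_rank_one_proj_formula q hq hq2 hrq v hvmem hv1 z
  set c : ℂ := ⟪u, v⟫ with hc
  have hcle : ‖c‖ ≤ 1 := by
    have := norm_inner_le_norm (𝕜 := ℂ) u v
    rwa [hu1, hv1, mul_one] at this
  have hs : (0:ℝ) ≤ 1 - ‖c‖ ^ 2 := by nlinarith [norm_nonneg c]
  have huw : ⟪u, v - c • u⟫ = 0 := by
    rw [inner_sub_right, inner_smul_right, inner_self_eq_norm_sq_to_K, hu1, ← hc]
    simp
  have hww : ‖v - c • u‖ ^ 2 = 1 - ‖c‖ ^ 2 := by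
    have h1 : ⟪v, c • u⟫ = ((‖c‖ ^ 2 : ℝ) : ℂ) := by
      rw [inner_smul_right, ← inner_conj_symm, ← hc, Complex.mul_conj, Complex.normSq_eq_norm_sq]
    rw [norm_sub_sq (𝕜 := ℂ), hv1, norm_smul, hu1, h1]
    simp only [RCLike.re_to_complex, Complex.ofReal_re, mul_one, one_pow]
    ring
  -- operator norm bound
  have hopz : ∀ z : H, ‖(p - q) z‖ ≤ Real.sqrt (1 - ‖c‖ ^ 2) * ‖z‖ := by
    intro z
    set a : ℂ := ⟪u, z⟫ with ha
    set d : ℂ := ⟪v - c • u, z⟫ with hd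
    have hb : ⟪v, z⟫ = (starRingEnd ℂ) c * a + d := by
      rw [hd, inner_sub_left, inner_smul_left, ha]
      ring
    have hsplit : (p - q) z
        = (a - ((starRingEnd ℂ) c * a + d) * c) • u
          + (-((starRingEnd ℂ) c * a + d)) • (v - c • u) := by
      rw [ContinuousLinearMap.sub_apply, hpz z, hqz z, hb, ← ha]
      module
    have horth : ⟪(a - ((starRingEnd ℂ) c * a + d) * c) • u,
        (-((starRingEnd ℂ) c * a + d)) • (v - c • u)⟫ = 0 := by
      rw [inner_smul_left, inner_smul_right, huw]
      ring
    have hE : ‖(p - q) z‖ ^ 2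
        = ‖a - ((starRingEnd ℂ) c * a + d) * c‖ ^ 2
          + ‖(starRingEnd ℂ) c * a + d‖ ^ 2 * (1 - ‖c‖ ^ 2) := by
      rw [hsplit, aux_pyth _ _ horth, norm_smul, norm_smul, norm_neg, mul_pow, mul_pow, hu1, hww]
      ring
    rw [aux_scalar_identity] at hE
    have hwu : ⟪v - c • u, u⟫ = 0 := by rw [← inner_conj_symm, huw, map_zero]
    have hdm : d = ⟪v - c • u, z - a • u⟫ := by
      rw [inner_sub_right, inner_smul_right, hwu, mul_zero, sub_zero, hd]
    have hum : ⟪u, z - a • u⟫ = 0 := by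
      rw [inner_sub_right, inner_smul_right, inner_self_eq_norm_sq_to_K, hu1, ← ha]
      simp
    have hz2 : ‖z‖ ^ 2 = ‖a‖ ^ 2 + ‖z - a • u‖ ^ 2 := by
      have h0 : ⟪a • u, z - a • u⟫ = 0 := by rw [inner_smul_left, hum, mul_zero]
      calc ‖z‖ ^ 2 = ‖a • u + (z - a • u)‖ ^ 2 := by rw [add_sub_cancel]
        _ = ‖a • u‖ ^ 2 + ‖z - a • u‖ ^ 2 := aux_pyth _ _ h0
        _ = ‖a‖ ^ 2 + ‖z - a • u‖ ^ 2 := by rw [norm_smul, hu1, mul_one]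
    have hcs : ‖d‖ ^ 2 ≤ (1 - ‖c‖ ^ 2) * (‖z‖ ^ 2 - ‖a‖ ^ 2) := by
      have h1 : ‖d‖ ≤ ‖v - c • u‖ * ‖z - a • u‖ := by
        rw [hdm]; exact norm_inner_le_norm _ _
      have h2 : ‖d‖ ^ 2 ≤ ‖v - c • u‖ ^ 2 * ‖z - a • u‖ ^ 2 := by
        nlinarith [norm_nonneg d, norm_nonneg (v - c • u), norm_nonneg (z - a • u)]
      rw [hww] at h2
      nlinarith [h2, hz2]
    have hEle : ‖(p - q) z‖ ^ 2 ≤ (1 - ‖c‖ ^ 2) * ‖z‖ ^ 2 := by nlinarith [hE, hcs]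
    calc ‖(p - q) z‖ = Real.sqrt (‖(p - q) z‖ ^ 2) := (Real.sqrt_sq (norm_nonneg _)).symm
      _ ≤ Real.sqrt ((1 - ‖c‖ ^ 2) * ‖z‖ ^ 2) := Real.sqrt_le_sqrt hEle
      _ = Real.sqrt (1 - ‖c‖ ^ 2) * ‖z‖ := by
          rw [Real.sqrt_mul hs, Real.sqrt_sq (norm_nonneg _)]
  have hop : ‖p - q‖ ≤ Real.sqrt (1 - ‖c‖ ^ 2) :=
    (p - q).opNorm_le_bound (Real.sqrt_nonneg _) hopz
  -- lower bound on ‖x + y‖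
  have hvne : v ≠ 0 := by intro h; rw [h] at hv1; simp at hv1
  obtain ⟨t, ht⟩ := (finrank_eq_one_iff_of_nonzero' (⟨v, hvmem⟩ : LinearMap.range (q : H →ₗ[ℂ] H))
    (by simpa [Subtype.ext_iff] using hvne)).mp hrq ⟨y, hy⟩
  have hty : t • v = y := congrArg Subtype.val ht
  have hxy2 : ‖x + y‖ ^ 2 = ‖x‖ ^ 2 + 2 * Complex.re ((‖x‖ : ℂ) * (t * c)) + ‖t‖ ^ 2 := by
    rw [← hty, hxu, norm_add_sq (𝕜 := ℂ), inner_smul_left, inner_smul_right, ← hc,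
      Complex.conj_ofReal, norm_smul, norm_smul, hu1, hv1, Complex.norm_real,
      Real.norm_eq_abs, abs_of_nonneg hrpos.le]
    simp only [RCLike.re_to_complex]
    ring
  have hre : -(‖x‖ * ‖t‖ * ‖c‖) ≤ Complex.re ((‖x‖ : ℂ) * (t * c)) := by
    have h1 := Complex.abs_re_le_norm ((‖x‖ : ℂ) * (t * c))
    have h2 := neg_abs_le (Complex.re ((‖x‖ : ℂ) * (t * c)))
    have h3 : ‖(‖x‖ : ℂ) * (t * c)‖ = ‖x‖ * (‖t‖ * ‖c‖) := by
      rw [norm_mul, norm_mul, Complex.norm_real, Real.norm_eq_abs, abs_of_nonneg hrpos.le]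
    rw [h3] at h1
    linarith [h1, h2]
  have hxylb2 : ‖x‖ ^ 2 * (1 - ‖c‖ ^ 2) ≤ ‖x + y‖ ^ 2 := by
    nlinarith [hxy2, hre, sq_nonneg (‖t‖ - ‖x‖ * ‖c‖)]
  have hxylb : ‖x‖ * Real.sqrt (1 - ‖c‖ ^ 2) ≤ ‖x + y‖ := by
    calc ‖x‖ * Real.sqrt (1 - ‖c‖ ^ 2) = Real.sqrt (‖x‖ ^ 2 * (1 - ‖c‖ ^ 2)) := by
          rw [Real.sqrt_mul (sq_nonneg _), Real.sqrt_sq hrpos.le]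
      _ ≤ Real.sqrt (‖x + y‖ ^ 2) := Real.sqrt_le_sqrt hxylb2
      _ = ‖x + y‖ := Real.sqrt_sq (norm_nonneg _)
  have hnpos : 0 < ‖p - q‖ := by
    rw [norm_pos_iff]
    exact sub_ne_zero.mpr hpq
  rw [← one_div, le_div_iff₀ hnpos]
  calc ‖x‖ * ‖p - q‖ ≤ ‖x‖ * Real.sqrt (1 - ‖c‖ ^ 2) :=
        mul_le_mul_of_nonneg_left hop hrpos.le
    _ ≤ ‖x + y‖ := hxylb
    _ ≤ 1 := hxy
end

section
/- Let H be a nonzero finite-dimensional complex Hilbert space with normalized uniform (Haar) probability measure ν on its unit sphere S(H). Then for every bounded linear operator a on H, (1/dim H)·tr(a) = ∫_{S(H)} ⟨x, a x⟩ dν(x). -/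
open scoped InnerProductSpace
open MeasureTheory

section aux
variable {H : Type*} [NormedAddCommGroup H] [InnerProductSpace ℂ H] [FiniteDimensional ℂ H]
    [MeasurableSpace H] [BorelSpace H]

lemma aux_inv (ν : Measure H)
    (hinv : ∀ u : H →L[ℂ] H, u ∈ unitary (H →L[ℂ] H) → ν.map u = ν)
    (e : H ≃ₗᵢ[ℂ] H) (f : H → ℂ) (hf : Continuous f) :
    ∫ x, f (e x) ∂ν = ∫ x, f x ∂ν := by
  have hu : (e : H →L[ℂ] H) ∈ unitary (H →L[ℂ] H) :=
    (Unitary.linearIsometryEquiv.symm e).2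
  have h1 : ν.map (e : H →L[ℂ] H) = ν := hinv _ hu
  have h2 : ∫ x, f x ∂(ν.map (e : H →L[ℂ] H)) = ∫ x, f ((e : H →L[ℂ] H) x) ∂ν :=
    integral_map (e : H →L[ℂ] H).continuous.aemeasurable hf.aestronglyMeasurable
  rw [h1] at h2
  exact h2.symm
end aux

theorem trace_eq_integral_inner_sphere
    {H : Type*} [NormedAddCommGroup H] [InnerProductSpace ℂ H] [FiniteDimensional ℂ H]
    [MeasurableSpace H] [BorelSpace H]
    (hdim : 0 < Module.finrank ℂ H)
    (ν : Measure H) [IsProbabilityMeasure ν]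
    (hsupp : ν {x : H | ‖x‖ = 1}ᶜ = 0)
    (hinv : ∀ u : H →L[ℂ] H, u ∈ unitary (H →L[ℂ] H) → ν.map u = ν)
    (a : H →L[ℂ] H) :
    ((Module.finrank ℂ H : ℂ))⁻¹ * LinearMap.trace ℂ H (a : H →ₗ[ℂ] H)
      = ∫ x, ⟪x, a x⟫_ℂ ∂ν := by
  classical
  set n := Module.finrank ℂ H with hn
  have hn0 : (n : ℂ) ≠ 0 := Nat.cast_ne_zero.mpr hdim.ne'
  let b : OrthonormalBasis (Fin n) ℂ H := stdOrthonormalBasis ℂ H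
  -- a.e. the norm is 1
  have hae : ∀ᵐ x ∂ν, ‖x‖ = 1 := by
    rw [ae_iff]
    exact hsupp
  -- continuity of the integrands
  have hcont : ∀ i j : Fin n, Continuous fun x : H => ⟪x, b i⟫_ℂ * ⟪b j, x⟫_ℂ := fun i j =>
    (continuous_id.inner continuous_const).mul (continuous_const.inner continuous_id)
  -- integrability
  have hint : ∀ i j : Fin n, Integrable (fun x : H => ⟪x, b i⟫_ℂ * ⟪b j, x⟫_ℂ) ν := by
    intro i j
    refine (integrable_const (1 : ℝ)).mono' (hcont i j).aestronglyMeasurable ?_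
    filter_upwards [hae] with x hx
    calc ‖⟪x, b i⟫_ℂ * ⟪b j, x⟫_ℂ‖ = ‖⟪x, b i⟫_ℂ‖ * ‖⟪b j, x⟫_ℂ‖ := norm_mul _ _
      _ ≤ (‖x‖ * ‖b i‖) * (‖b j‖ * ‖x‖) :=
        mul_le_mul (norm_inner_le_norm _ _) (norm_inner_le_norm _ _) (norm_nonneg _)
          (by positivity)
      _ = 1 := by simp [hx, b.orthonormal.1]
  set M : Fin n → Fin n → ℂ := fun i j => ∫ x, ⟪x, b i⟫_ℂ * ⟪b j, x⟫_ℂ ∂ν with hM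
  -- coordinates after applying a conjugated isometry
  have hrep : ∀ (x : H) (k : Fin n), ⟪b k, x⟫_ℂ = b.repr x k := fun x k =>
    (b.repr_apply_apply x k).symm
  -- off-diagonal entries vanish
  have hoff : ∀ i j : Fin n, i ≠ j → M i j = 0 := by
    intro i j hij
    let g : EuclideanSpace ℂ (Fin n) ≃ₗᵢ[ℂ] EuclideanSpace ℂ (Fin n) :=
      LinearIsometryEquiv.piLpCongrRight 2
        (fun k => if k = i then LinearIsometryEquiv.neg ℂ else LinearIsometryEquiv.refl ℂ ℂ)
    let e : H ≃ₗᵢ[ℂ] H := (b.repr.trans g).trans b.repr.symm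
    have hcoord : ∀ (x : H) (k : Fin n),
        b.repr (e x) k = if k = i then -(b.repr x k) else b.repr x k := by
      intro x k
      show b.repr (b.repr.symm (g (b.repr x))) k = _
      rw [LinearIsometryEquiv.apply_symm_apply]
      show (if k = i then LinearIsometryEquiv.neg ℂ else LinearIsometryEquiv.refl ℂ ℂ)
          (b.repr x k) = _
      split <;> simp
    have key : ∀ x : H, ⟪e x, b i⟫_ℂ * ⟪b j, e x⟫_ℂ = -(⟪x, b i⟫_ℂ * ⟪b j, x⟫_ℂ) := by
      intro x
      rw [← inner_conj_symm (e x) (b i), ← inner_conj_symm x (b i)]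
      rw [hrep, hrep, hcoord, hcoord, if_pos rfl, if_neg hij.symm, hrep x, hrep x]
      simp only [map_neg]
      ring
    have := aux_inv ν hinv e _ (hcont i j)
    simp_rw [key] at this
    rw [integral_neg] at this
    have h2 : -M i j = M i j := this
    linear_combination (-1/2 : ℂ) * h2
  -- diagonal entries are all equal
  have hdiag_eq : ∀ i j : Fin n, M i i = M j j := by
    intro i j
    let g : EuclideanSpace ℂ (Fin n) ≃ₗᵢ[ℂ] EuclideanSpace ℂ (Fin n) :=
      LinearIsometryEquiv.piLpCongrLeft 2 ℂ ℂ (Equiv.swap i j)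
    let e : H ≃ₗᵢ[ℂ] H := (b.repr.trans g).trans b.repr.symm
    have hcoord : ∀ (x : H) (k : Fin n), b.repr (e x) k = b.repr x (Equiv.swap i j k) := by
      intro x k
      show b.repr (b.repr.symm (g (b.repr x))) k = _
      rw [LinearIsometryEquiv.apply_symm_apply]
      rw [LinearIsometryEquiv.piLpCongrLeft_apply]
      show b.repr x ((Equiv.swap i j).symm k) = _
      rw [Equiv.symm_swap]
    have key : ∀ x : H, ⟪e x, b i⟫_ℂ * ⟪b i, e x⟫_ℂ = ⟪x, b j⟫_ℂ * ⟪b j, x⟫_ℂ := by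
      intro x
      rw [← inner_conj_symm (e x) (b i), ← inner_conj_symm x (b j)]
      simp only [hrep, hcoord]
      rw [Equiv.swap_apply_left]
    have := aux_inv ν hinv e _ (hcont i i)
    simp_rw [key] at this
    exact this.symm
  -- the diagonal sums to 1
  have hsum : ∑ i, M i i = 1 := by
    rw [← integral_finset_sum _ (fun i _ => hint i i)]
    have : ∀ᵐ x ∂ν, ∑ i, ⟪x, b i⟫_ℂ * ⟪b i, x⟫_ℂ = 1 := by
      filter_upwards [hae] with x hx
      rw [b.sum_inner_mul_inner x x, inner_self_eq_norm_sq_to_K, hx]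
      norm_num
    rw [integral_congr_ae this]
    simp
  have hdiag : ∀ i : Fin n, M i i = (n : ℂ)⁻¹ := by
    intro i
    have h1 : ∑ j, M j j = (n : ℂ) * M i i := by
      rw [Finset.sum_congr rfl (fun j _ => hdiag_eq j i)]
      simp [mul_comm]
    rw [hsum] at h1
    field_simp at h1 ⊢
    linear_combination -h1
  -- expansion of the integrand
  have hexp : ∀ x : H, ⟪x, a x⟫_ℂ
      = ∑ i, ∑ j, ⟪b i, a (b j)⟫_ℂ * (⟪x, b i⟫_ℂ * ⟪b j, x⟫_ℂ) := by
    intro x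
    have h1 : a x = ∑ j, ⟪b j, x⟫_ℂ • a (b j) := by
      conv_lhs => rw [← b.sum_repr' x]
      rw [map_sum]
      simp
    have h2 : ⟪x, a x⟫_ℂ = ∑ j, ⟪b j, x⟫_ℂ * ⟪x, a (b j)⟫_ℂ := by
      rw [h1, inner_sum]
      simp [inner_smul_right]
    rw [h2, Finset.sum_comm]
    refine Finset.sum_congr rfl fun j _ => ?_
    rw [← b.sum_inner_mul_inner x (a (b j)), Finset.mul_sum]
    refine Finset.sum_congr rfl fun i _ => ?_
    ring
  -- trace as a sum of diagonal inner products
  have htr : LinearMap.trace ℂ H (a : H →ₗ[ℂ] H) = ∑ i, ⟪b i, a (b i)⟫_ℂ := by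
    rw [LinearMap.trace_eq_matrix_trace ℂ b.toBasis, Matrix.trace]
    refine Finset.sum_congr rfl fun i _ => ?_
    rw [Matrix.diag_apply, LinearMap.toMatrix_apply, b.coe_toBasis_repr_apply,
      b.repr_apply_apply]
    simp [b]
  -- put everything together
  have hrhs : ∫ x, ⟪x, a x⟫_ℂ ∂ν
      = ∑ i, ∑ j, ⟪b i, a (b j)⟫_ℂ * M i j := by
    rw [integral_congr_ae (Filter.Eventually.of_forall hexp)]
    rw [integral_finset_sum _ (fun i _ =>
      integrable_finset_sum _ (fun j _ => (hint i j).const_mul _))]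
    refine Finset.sum_congr rfl fun i _ => ?_
    rw [integral_finset_sum _ (fun j _ => (hint i j).const_mul _)]
    exact Finset.sum_congr rfl fun j _ => integral_const_mul _ _
  rw [hrhs, htr]
  rw [Finset.sum_congr rfl (fun i (_ : i ∈ Finset.univ) =>
    Finset.sum_eq_single i (fun j _ hji => by rw [hoff i j (Ne.symm hji), mul_zero])
      (fun h => absurd (Finset.mem_univ i) h))]
  simp_rw [hdiag]
  rw [Finset.mul_sum]
  refine Finset.sum_congr rfl fun i _ => ?_
  ring
end

section
/- Let H be a complex Hilbert space and p an orthogonal projection on H with 0 < rk(p) < ∞. For every a ∈ B(H), (1/rk p)·tr(a p) = ∫_{S(p(H))} ⟨x, a x⟩ dν(x), where ν is the Haar probability measure on the unit sphere of the subspace p(H). -/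
open scoped InnerProductSpace
open MeasureTheory

noncomputable section ReflHelper

variable {H : Type*} [NormedAddCommGroup H] [InnerProductSpace ℂ H] [CompleteSpace H]

/-- reflection across the hyperplane orthogonal to `d`. -/
def sphRefl (d : H) : H →L[ℂ] H :=
  1 - (((2 : ℂ) / ⟪d, d⟫_ℂ) • ((innerSL ℂ d).smulRight d))

omit [CompleteSpace H] in
lemma sphRefl_apply (d x : H) :
    sphRefl d x = x - ((2 : ℂ) / ⟪d, d⟫_ℂ * ⟪d, x⟫_ℂ) • d := by
  simp [sphRefl, smul_smul]

lemma sphRefl_inner_symm (d x y : H) :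
    ⟪sphRefl d x, y⟫_ℂ = ⟪x, sphRefl d y⟫_ℂ := by
  simp only [sphRefl_apply, inner_sub_left, inner_sub_right, inner_smul_left, inner_smul_right]
  rw [map_mul, map_div₀, inner_self_conj, ← inner_conj_symm x d]
  simp only [map_ofNat, RingHom.id_apply, starRingEnd_self_apply]
  ring

lemma sphRefl_involutive (d : H) (hd : d ≠ 0) (x : H) :
    sphRefl d (sphRefl d x) = x := by
  have hN : ⟪d, d⟫_ℂ ≠ 0 := by
    simpa [inner_self_eq_zero] using hd
  simp only [sphRefl_apply, inner_sub_right, inner_smul_right]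
  rw [sub_sub, ← add_smul]
  have : (2 : ℂ) / ⟪d, d⟫_ℂ * ⟪d, x⟫_ℂ +
      2 / ⟪d, d⟫_ℂ * (⟪d, x⟫_ℂ - 2 / ⟪d, d⟫_ℂ * ⟪d, x⟫_ℂ * ⟪d, d⟫_ℂ) = 0 := by
    field_simp
    ring
  rw [this, zero_smul, sub_zero]

lemma sphRefl_mem_unitary (d : H) (hd : d ≠ 0) :
    sphRefl d ∈ unitary (H →L[ℂ] H) := by
  have hsa : star (sphRefl d) = sphRefl d := by
    rw [ContinuousLinearMap.star_eq_adjoint]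
    exact ((ContinuousLinearMap.eq_adjoint_iff (sphRefl d) (sphRefl d)).mpr
      (fun x y => sphRefl_inner_symm d x y)).symm
  have hsq : sphRefl d * sphRefl d = 1 := by
    ext x
    simpa using sphRefl_involutive d hd x
  exact Unitary.mem_iff.mpr ⟨by rw [hsa, hsq], by rw [hsa, hsq]⟩

lemma sphRefl_comm (p : H →L[ℂ] H) (hp : IsSelfAdjoint p) (hp2 : IsIdempotentElem p)
    (d : H) (hd : d ∈ LinearMap.range (p : H →ₗ[ℂ] H)) :
    sphRefl d * p = p * sphRefl d := by
  have hpd : p d = d := by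
    obtain ⟨z, rfl⟩ := hd
    have := DFunLike.congr_fun hp2 z
    simpa using this
  have hsym := ContinuousLinearMap.isSelfAdjoint_iff_isSymmetric.mp hp
  ext x
  have h1 : ⟪d, p x⟫_ℂ = ⟪d, x⟫_ℂ := by
    conv_rhs => rw [← hpd]
    exact (hsym d x).symm
  simp [ContinuousLinearMap.mul_apply, sphRefl_apply, _root_.map_sub, _root_.map_smul, hpd, h1]

end ReflHelper
theorem trace_comp_projection_eq_integral_subsphere
    {H : Type*} [NormedAddCommGroup H] [InnerProductSpace ℂ H] [CompleteSpace H]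
    [MeasurableSpace H] [BorelSpace H]
    {ι : Type*} (b : HilbertBasis ι ℂ H)
    (p : H →L[ℂ] H) (hp : IsSelfAdjoint p) (hp2 : IsIdempotentElem p)
    (hfin : FiniteDimensional ℂ (LinearMap.range (p : H →ₗ[ℂ] H)))
    (hrk : 0 < Module.finrank ℂ (LinearMap.range (p : H →ₗ[ℂ] H)))
    (ν : Measure H) [IsProbabilityMeasure ν]
    (hsupp : ν {x : H | ‖x‖ = 1 ∧ x ∈ LinearMap.range (p : H →ₗ[ℂ] H)}ᶜ = 0)
    (hinv : ∀ u : H →L[ℂ] H, u ∈ unitary (H →L[ℂ] H) → u * p = p * u → ν.map u = ν)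
    (a : H →L[ℂ] H) :
    ((Module.finrank ℂ (LinearMap.range (p : H →ₗ[ℂ] H)) : ℂ))⁻¹ * ∑' i, ⟪b i, a (p (b i))⟫_ℂ
      = ∫ x, ⟪x, a x⟫_ℂ ∂ν := by
  classical
  set V := LinearMap.range (p : H →ₗ[ℂ] H) with hV
  haveI : FiniteDimensional ℂ V := hfin
  set n := Module.finrank ℂ V with hn
  set e : OrthonormalBasis (Fin n) ℂ V := stdOrthonormalBasis ℂ V with he
  set f : Fin n → H := fun i => (e i : H) with hf
  have hf_mem : ∀ i, f i ∈ V := fun i => (e i).2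
  have hf_inner : ∀ i j, ⟪f i, f j⟫_ℂ = if i = j then 1 else 0 := by
    intro i j
    have := orthonormal_iff_ite.mp e.orthonormal i j
    simpa [Submodule.coe_inner, hf] using this
  have hpfix : ∀ x ∈ V, p x = x := by
    rintro x ⟨z, rfl⟩
    simpa using DFunLike.congr_fun hp2 z
  have hsym := ContinuousLinearMap.isSelfAdjoint_iff_isSymmetric.mp hp
  -- representation of elements of V
  have hrepr : ∀ x ∈ V, x = ∑ k, ⟪f k, x⟫_ℂ • f k := by
    intro x hx
    lift x to V using hx
    have h0 := congrArg (Subtype.val) (e.sum_repr' x)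
    simpa [Submodule.coe_inner, hf] using h0.symm
  -- quadratic form expansion
  have hexp : ∀ (c : H →L[ℂ] H), ∀ x ∈ V,
      ⟪x, c x⟫_ℂ = ∑ l, ∑ k, ⟪f l, c (f k)⟫_ℂ * (⟪x, f l⟫_ℂ * ⟪f k, x⟫_ℂ) := by
    intro c x hx
    conv_lhs => rw [hrepr x hx]
    rw [map_sum, sum_inner]
    refine Finset.sum_congr rfl fun l _ => ?_
    rw [inner_smul_left, inner_sum, Finset.mul_sum]
    refine Finset.sum_congr rfl fun k _ => ?_
    rw [ContinuousLinearMap.map_smul, inner_smul_right, inner_conj_symm]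
    ring

  -- a.e. support
  have hae : ∀ᵐ x ∂ν, ‖x‖ = 1 ∧ x ∈ V := by
    rw [MeasureTheory.ae_iff]
    simpa [Set.compl_setOf] using hsupp
  have hcont : ∀ i j : Fin n, Continuous fun x : H => ⟪x, f i⟫_ℂ * ⟪f j, x⟫_ℂ :=
    fun i j => (continuous_id.inner continuous_const).mul (continuous_const.inner continuous_id)
  have hnorm_f : ∀ i, ‖f i‖ = 1 := fun i => e.orthonormal.1 i
  have hint : ∀ i j : Fin n, Integrable (fun x : H => ⟪x, f i⟫_ℂ * ⟪f j, x⟫_ℂ) ν := by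
    intro i j
    refine Integrable.mono' (integrable_const 1) ((hcont i j).aestronglyMeasurable) ?_
    filter_upwards [hae] with x hx
    calc ‖⟪x, f i⟫_ℂ * ⟪f j, x⟫_ℂ‖ = ‖⟪x, f i⟫_ℂ‖ * ‖⟪f j, x⟫_ℂ‖ := norm_mul _ _
      _ ≤ (‖x‖ * ‖f i‖) * (‖f j‖ * ‖x‖) :=
          mul_le_mul (norm_inner_le_norm _ _) (norm_inner_le_norm _ _) (norm_nonneg _)
            (by positivity)
      _ = 1 := by rw [hx.1, hnorm_f, hnorm_f]; ring
  -- change of variables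
  have hmap : ∀ d : H, d ∈ V → d ≠ 0 → ∀ i j : Fin n,
      (∫ x, ⟪x, f i⟫_ℂ * ⟪f j, x⟫_ℂ ∂ν)
        = ∫ x, ⟪x, sphRefl d (f i)⟫_ℂ * ⟪sphRefl d (f j), x⟫_ℂ ∂ν := by
    intro d hd hd0 i j
    have hm := hinv (sphRefl d) (sphRefl_mem_unitary d hd0) (sphRefl_comm p hp hp2 d hd)
    conv_lhs => rw [← hm]
    rw [MeasureTheory.integral_map ((sphRefl d).continuous.measurable.aemeasurable)
      ((hcont i j).aestronglyMeasurable)]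
    refine integral_congr_ae (Filter.Eventually.of_forall fun x => ?_)
    beta_reduce
    rw [← sphRefl_inner_symm d x (f i), sphRefl_inner_symm d (f j) x]
  -- off-diagonal vanishing
  have hzero : ∀ i j : Fin n, i ≠ j → (∫ x, ⟪x, f i⟫_ℂ * ⟪f j, x⟫_ℂ ∂ν) = 0 := by
    intro i j hij
    have hd0 : f j ≠ 0 := by
      intro h
      have := hf_inner j j
      rw [h] at this
      simp at this
    have h := hmap (f j) (hf_mem j) hd0 i j
    have hfi : sphRefl (f j) (f i) = f i := by
      rw [sphRefl_apply, hf_inner j i, if_neg (Ne.symm hij)]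
      simp
    have hfj : sphRefl (f j) (f j) = -(f j) := by
      rw [sphRefl_apply, hf_inner j j, if_pos rfl]
      rw [show (2:ℂ)/1 * 1 = 2 by norm_num, two_smul]
      abel
    rw [hfi, hfj] at h
    have h2 : (∫ x, ⟪x, f i⟫_ℂ * ⟪f j, x⟫_ℂ ∂ν) = - ∫ x, ⟪x, f i⟫_ℂ * ⟪f j, x⟫_ℂ ∂ν := by
      conv_lhs => rw [h]
      rw [← MeasureTheory.integral_neg]
      refine integral_congr_ae (Filter.Eventually.of_forall fun x => ?_)
      beta_reduce
      rw [inner_neg_left]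
      ring
    have := add_eq_zero_iff_eq_neg.mpr h2
    have h3 : (2:ℂ) * ∫ x, ⟪x, f i⟫_ℂ * ⟪f j, x⟫_ℂ ∂ν = 0 := by rw [two_mul]; exact this
    simpa using (mul_eq_zero.mp h3).resolve_left (by norm_num)

  -- diagonal entries are all equal
  have hdiag : ∀ i j : Fin n, (∫ x, ⟪x, f i⟫_ℂ * ⟪f i, x⟫_ℂ ∂ν)
      = ∫ x, ⟪x, f j⟫_ℂ * ⟪f j, x⟫_ℂ ∂ν := by
    intro i j
    rcases eq_or_ne i j with rfl | hij
    · rfl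
    set d := f i - f j with hd
    have hdV : d ∈ V := sub_mem (hf_mem i) (hf_mem j)
    have hdd : ⟪d, d⟫_ℂ = 2 := by
      simp only [hd, inner_sub_left, inner_sub_right, hf_inner, if_pos rfl,
        if_neg hij, if_neg (Ne.symm hij)]
      norm_num
    have hd0 : d ≠ 0 := by
      intro h
      rw [h] at hdd
      simp at hdd
    have hdfi : sphRefl d (f i) = f j := by
      have h1 : ⟪d, f i⟫_ℂ = 1 := by
        simp only [hd, inner_sub_left, hf_inner, if_pos rfl, if_neg (Ne.symm hij)]
        norm_num
      rw [sphRefl_apply, hdd, h1]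
      rw [show (2:ℂ)/2 * 1 = 1 by norm_num, one_smul, hd]
      abel
    have h := hmap d hdV hd0 i i
    rw [hdfi] at h
    exact h
  -- sum of diagonal entries is 1
  have hsum : ∑ i : Fin n, (∫ x, ⟪x, f i⟫_ℂ * ⟪f i, x⟫_ℂ ∂ν) = 1 := by
    rw [← MeasureTheory.integral_finset_sum _ (fun i _ => hint i i)]
    have hone : ∀ᵐ x ∂ν, (∑ i : Fin n, ⟪x, f i⟫_ℂ * ⟪f i, x⟫_ℂ) = (1 : ℂ) := by
      filter_upwards [hae] with x hx
      have h1 := hexp 1 x hx.2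
      simp only [ContinuousLinearMap.one_apply] at h1
      have hxx : ⟪x, x⟫_ℂ = 1 := by
        rw [inner_self_eq_norm_sq_to_K, hx.1]
        norm_num
      rw [← hxx, h1]
      refine Finset.sum_congr rfl fun l _ => ?_
      rw [Finset.sum_eq_single l]
      · rw [hf_inner l l, if_pos rfl, one_mul]
      · intro k _ hk
        rw [hf_inner l k, if_neg (Ne.symm hk), zero_mul]
      · intro hl
        exact absurd (Finset.mem_univ l) hl
    rw [integral_congr_ae hone]
    simp
  -- the common diagonal value
  have hval : ∀ i : Fin n, (∫ x, ⟪x, f i⟫_ℂ * ⟪f i, x⟫_ℂ ∂ν) = (n : ℂ)⁻¹ := by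
    intro i
    have hmul : (n : ℂ) * (∫ x, ⟪x, f i⟫_ℂ * ⟪f i, x⟫_ℂ ∂ν) = 1 := by
      rw [← hsum, Finset.sum_congr rfl fun j _ => hdiag j i]
      simp [Finset.sum_const, Finset.card_univ, mul_comm]
    exact eq_inv_of_mul_eq_one_left (by rw [mul_comm]; exact hmul)

  -- compute the integral
  have hRHS : ∫ x, ⟪x, a x⟫_ℂ ∂ν = (n : ℂ)⁻¹ * ∑ l : Fin n, ⟪f l, a (f l)⟫_ℂ := by
    have hcongr : ∀ᵐ x ∂ν, ⟪x, a x⟫_ℂ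
        = ∑ l, ∑ k, ⟪f l, a (f k)⟫_ℂ * (⟪x, f l⟫_ℂ * ⟪f k, x⟫_ℂ) := by
      filter_upwards [hae] with x hx
      exact hexp a x hx.2
    rw [integral_congr_ae hcongr,
      MeasureTheory.integral_finset_sum _
        (fun l _ => integrable_finset_sum _ (fun k _ => (hint l k).const_mul _))]
    have hinner : ∀ l : Fin n,
        (∫ x, ∑ k, ⟪f l, a (f k)⟫_ℂ * (⟪x, f l⟫_ℂ * ⟪f k, x⟫_ℂ) ∂ν)
          = ⟪f l, a (f l)⟫_ℂ * (n : ℂ)⁻¹ := by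
      intro l
      rw [MeasureTheory.integral_finset_sum _ (fun k _ => (hint l k).const_mul _)]
      have hterm : ∀ k : Fin n,
          (∫ x, ⟪f l, a (f k)⟫_ℂ * (⟪x, f l⟫_ℂ * ⟪f k, x⟫_ℂ) ∂ν)
            = ⟪f l, a (f k)⟫_ℂ * ∫ x, ⟪x, f l⟫_ℂ * ⟪f k, x⟫_ℂ ∂ν := by
        intro k
        simp_rw [← smul_eq_mul (a := ⟪f l, a (f k)⟫_ℂ)]
        rw [integral_smul]
      rw [Finset.sum_congr rfl fun k _ => hterm k]
      rw [Finset.sum_eq_single l]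
      · rw [hval l]
      · intro k _ hk
        rw [hzero l k (Ne.symm hk), mul_zero]
      · intro hl
        exact absurd (Finset.mem_univ l) hl
    rw [Finset.sum_congr rfl fun l _ => hinner l, ← Finset.sum_mul, mul_comm]
  -- compute the trace
  have htr : ∑' i, ⟪b i, a (p (b i))⟫_ℂ = ∑ l : Fin n, ⟪f l, a (f l)⟫_ℂ := by
    have hterm : ∀ i : ι, ⟪b i, a (p (b i))⟫_ℂ
        = ∑ k, ⟪f k, b i⟫_ℂ * ⟪b i, a (f k)⟫_ℂ := by
      intro i
      have hmem : p (b i) ∈ V := LinearMap.mem_range_self _ _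
      conv_lhs => rw [hrepr (p (b i)) hmem]
      rw [map_sum, inner_sum]
      refine Finset.sum_congr rfl fun k _ => ?_
      rw [ContinuousLinearMap.map_smul, inner_smul_right]
      congr 1
      have h := hsym (f k) (b i)
      simp only [ContinuousLinearMap.coe_coe] at h
      rw [← h, hpfix (f k) (hf_mem k)]
    have hhs : HasSum (fun i : ι => ∑ k : Fin n, ⟪f k, b i⟫_ℂ * ⟪b i, a (f k)⟫_ℂ)
        (∑ k : Fin n, ⟪f k, a (f k)⟫_ℂ) :=
      hasSum_sum (fun k _ => b.hasSum_inner_mul_inner (f k) (a (f k)))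
    rw [tsum_congr hterm]
    exact hhs.tsum_eq
  rw [htr, hRHS]
end

section
/- Let H be a nonzero finite-dimensional complex Hilbert space with Haar probability measure ν on its unit sphere S(H). If a Borel set B ⊆ S(H) satisfies dim(H)·ν(S(H) \ B) < 1, then B contains an orthonormal basis of H. -/
open MeasureTheory

set_option maxHeartbeats 1000000
set_option synthInstance.maxHeartbeats 400000

private lemma haar_map_mul_right_eq_self {G : Type*} [Group G] [TopologicalSpace G]
    [IsTopologicalGroup G] [MeasurableSpace G] [BorelSpace G] [CompactSpace G]
    (μ : Measure G) [μ.IsHaarMeasure] [IsProbabilityMeasure μ] (g : G) :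
    μ.map (· * g) = μ := by
  have hmg : Measurable (· * g : G → G) := (continuous_mul_right g).measurable
  have hmul : ∀ h : G, Measurable (h * · : G → G) := fun h => (continuous_mul_left h).measurable
  haveI h1 : IsProbabilityMeasure (μ.map (· * g)) := Measure.isProbabilityMeasure_map hmg.aemeasurable
  haveI h2 : (μ.map (· * g)).IsMulLeftInvariant := by
    constructor
    intro h
    rw [Measure.map_map (hmul h) hmg]
    have : ((h * ·) ∘ (· * g)) = ((· * g) ∘ (h * ·)) := funext fun x => (mul_assoc h x g).symm
    rw [this, ← Measure.map_map hmg (hmul h), MeasureTheory.map_mul_left_eq_self μ h]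
  have key := Measure.isMulInvariant_eq_smul_of_compactSpace (μ.map (· * g)) μ
  have huniv := congrArg (fun m : Measure G => m Set.univ) key
  simp only [measure_univ, Measure.smul_apply, ENNReal.smul_def, smul_eq_mul, mul_one] at huniv
  rw [key]
  ext s hs
  simp [ENNReal.smul_def, ← huniv]

section UnitaryInstances

variable {H : Type*} [NormedAddCommGroup H] [InnerProductSpace ℂ H] [FiniteDimensional ℂ H]

private instance : IsTopologicalGroup (unitary (H →L[ℂ] H)) where
  continuous_mul := by
    apply Continuous.subtype_mk
    exact (continuous_subtype_val.comp continuous_fst).mul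
      (continuous_subtype_val.comp continuous_snd)
  continuous_inv := by
    apply Continuous.subtype_mk
    exact continuous_star.comp continuous_subtype_val

private lemma isCompact_unitary [Nontrivial H] :
    IsCompact (unitary (H →L[ℂ] H) : Set (H →L[ℂ] H)) := by
  have hclosed : IsClosed (unitary (H →L[ℂ] H) : Set (H →L[ℂ] H)) := by
    have heq : (unitary (H →L[ℂ] H) : Set (H →L[ℂ] H)) =
        (fun u : H →L[ℂ] H => (star u * u, u * star u)) ⁻¹'
          {((1 : H →L[ℂ] H), (1 : H →L[ℂ] H))} := by
      ext u
      simp only [SetLike.mem_coe, Unitary.mem_iff, Set.mem_preimage,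
        Set.mem_singleton_iff, Prod.mk.injEq]
    rw [heq]
    exact IsClosed.preimage
      ((continuous_star.mul continuous_id).prodMk (continuous_id.mul continuous_star))
      isClosed_singleton
  have hbdd : (unitary (H →L[ℂ] H) : Set (H →L[ℂ] H)) ⊆ Metric.closedBall 0 1 := by
    intro u hu
    rw [Metric.mem_closedBall, dist_zero_right]
    exact le_of_eq (CStarRing.norm_coe_unitary ⟨u, hu⟩)
  exact Metric.isCompact_of_isClosed_isBounded hclosed
    (Bornology.IsBounded.subset Metric.isBounded_closedBall hbdd)

private instance [Nontrivial H] : CompactSpace (unitary (H →L[ℂ] H)) :=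
  isCompact_iff_compactSpace.mp isCompact_unitary

private lemma exists_unitary_apply_eq {x y : H} (hx : ‖x‖ = 1) (hy : ‖y‖ = 1) :
    ∃ v : unitary (H →L[ℂ] H), (v : H →L[ℂ] H) x = y := by
  have hx0 : x ≠ 0 := by intro h; rw [h, norm_zero] at hx; exact one_ne_zero hx.symm
  have hdim : 0 < Module.finrank ℂ H :=
    Module.finrank_pos_iff.mpr (nontrivial_of_ne x 0 hx0)
  set n := Module.finrank ℂ H with hn
  have hcard : Module.finrank ℂ H = Fintype.card (Fin n) := by simp [hn]
  have horth : ∀ z : H, ‖z‖ = 1 →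
      Orthonormal ℂ (Set.restrict {(⟨0, hdim⟩ : Fin n)} (fun _ : Fin n => z)) := by
    intro z hz
    constructor
    · intro i; exact hz
    · intro i j hij
      exact absurd (Subtype.ext ((i.2.trans j.2.symm : (i : Fin n) = j))) hij
  obtain ⟨bx, hbx⟩ := Orthonormal.exists_orthonormalBasis_extension_of_card_eq hcard (horth x hx)
  obtain ⟨by', hby⟩ := Orthonormal.exists_orthonormalBasis_extension_of_card_eq hcard (horth y hy)
  refine ⟨Unitary.linearIsometryEquiv.symm (bx.repr.trans by'.repr.symm), ?_⟩
  have hco := Unitary.coe_symm_linearIsometryEquiv_apply (𝕜 := ℂ) (bx.repr.trans by'.repr.symm)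
  rw [hco]
  have h1 : bx.repr x = EuclideanSpace.single (⟨0, hdim⟩ : Fin n) (1 : ℂ) := by
    rw [← hbx ⟨0, hdim⟩ rfl, bx.repr_self]
  show (bx.repr.trans by'.repr.symm) x = y
  rw [LinearIsometryEquiv.trans_apply, h1, by'.repr_symm_single, hby ⟨0, hdim⟩ rfl]

end UnitaryInstances

theorem exists_orthonormal_basis_in_large_measure_set
    {H : Type*} [NormedAddCommGroup H] [InnerProductSpace ℂ H] [FiniteDimensional ℂ H]
    [MeasurableSpace H] [BorelSpace H]
    (hdim : 0 < Module.finrank ℂ H)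
    (ν : Measure H) [IsProbabilityMeasure ν]
    (hsupp : ν {x : H | ‖x‖ = 1}ᶜ = 0)
    (hinv : ∀ u : H →L[ℂ] H, u ∈ unitary (H →L[ℂ] H) → ν.map u = ν)
    (B : Set H) (hB : MeasurableSet B) (hBs : B ⊆ {x : H | ‖x‖ = 1})
    (h : (Module.finrank ℂ H : ENNReal) * ν ({x : H | ‖x‖ = 1} \ B) < 1) :
    ∃ f : Fin (Module.finrank ℂ H) → H, (∀ i, f i ∈ B) ∧ Orthonormal ℂ f := by
  classical
  haveI : Nontrivial H := Module.finrank_pos_iff.mp hdim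
  letI : MeasurableSpace (unitary (H →L[ℂ] H)) := borel _
  haveI : BorelSpace (unitary (H →L[ℂ] H)) := ⟨rfl⟩
  haveI : Nonempty (unitary (H →L[ℂ] H)) := ⟨1⟩
  set K₀ : TopologicalSpace.PositiveCompacts (unitary (H →L[ℂ] H)) :=
    ⟨⟨Set.univ, isCompact_univ⟩, by simpa [interior_univ] using Set.univ_nonempty⟩ with hK₀
  set μ := Measure.haarMeasure K₀ with hμ
  haveI : IsProbabilityMeasure μ := ⟨by
    rw [show (Set.univ : Set (unitary (H →L[ℂ] H))) = ↑K₀ from rfl, hμ,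
      Measure.haarMeasure_self]⟩
  -- continuity/measurability of evaluation
  have hφcont : ∀ x : H, Continuous fun u : unitary (H →L[ℂ] H) => (u : H →L[ℂ] H) x :=
    fun x => (ContinuousLinearMap.apply ℂ H x).continuous.comp continuous_subtype_val
  have hjoint : Continuous fun p : (unitary (H →L[ℂ] H)) × H => (p.1 : H →L[ℂ] H) p.2 :=
    isBoundedBilinearMap_apply.continuous.comp
      ((continuous_subtype_val.comp continuous_fst).prodMk continuous_snd)
  -- the key identity : μ {u | u x ∈ A} = ν A for unit x and measurable A
  have hsame : ∀ A : Set H, MeasurableSet A → ∀ x y : H, ‖x‖ = 1 → ‖y‖ = 1 →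
      μ {u : unitary (H →L[ℂ] H) | (u : H →L[ℂ] H) x ∈ A}
        = μ {u : unitary (H →L[ℂ] H) | (u : H →L[ℂ] H) y ∈ A} := by
    intro A hA x y hx hy
    obtain ⟨w, hw⟩ := exists_unitary_apply_eq hy hx
    have hset : {u : unitary (H →L[ℂ] H) | (u : H →L[ℂ] H) x ∈ A}
        = (· * w) ⁻¹' {u : unitary (H →L[ℂ] H) | (u : H →L[ℂ] H) y ∈ A} := by
      ext u
      simp only [Set.mem_setOf_eq, Set.mem_preimage]
      have : ((u * w : unitary (H →L[ℂ] H)) : H →L[ℂ] H) y = (u : H →L[ℂ] H) x := by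
        rw [Submonoid.coe_mul, ContinuousLinearMap.mul_apply, hw]
      rw [this]
    have hmeasY : MeasurableSet {u : unitary (H →L[ℂ] H) | (u : H →L[ℂ] H) y ∈ A} :=
      (hφcont y).measurable hA
    rw [hset, ← Measure.map_apply ((continuous_mul_right w).measurable) hmeasY,
      haar_map_mul_right_eq_self μ w]
  have hkey : ∀ A : Set H, MeasurableSet A → ∀ y : H, ‖y‖ = 1 →
      μ {u : unitary (H →L[ℂ] H) | (u : H →L[ℂ] H) y ∈ A} = ν A := by
    intro A hA y hy
    symm
    have hμA : ∀ u : unitary (H →L[ℂ] H), ν ((u : H →L[ℂ] H) ⁻¹' A) = ν A := fun u => by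
      rw [← Measure.map_apply (u : H →L[ℂ] H).continuous.measurable hA, hinv u u.2]
    have hmf : Measurable (Function.uncurry fun (u : unitary (H →L[ℂ] H)) (x : H) =>
        A.indicator (fun _ => (1 : ENNReal)) ((u : H →L[ℂ] H) x)) := by
      have : Measurable fun p : (unitary (H →L[ℂ] H)) × H => (p.1 : H →L[ℂ] H) p.2 :=
        hjoint.measurable
      exact (measurable_const.indicator hA).comp this
    have step1 : ν A = ∫⁻ u : unitary (H →L[ℂ] H), ν ((u : H →L[ℂ] H) ⁻¹' A) ∂μ := by
      simp only [hμA, lintegral_const, measure_univ, mul_one]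
    have step2 : ∀ u : unitary (H →L[ℂ] H),
        ν ((u : H →L[ℂ] H) ⁻¹' A)
          = ∫⁻ x, A.indicator (fun _ => (1 : ENNReal)) ((u : H →L[ℂ] H) x) ∂ν := fun u => by
      rw [lintegral_indicator_const_comp (u : H →L[ℂ] H).continuous.measurable hA, one_mul]
    have step4 : ∀ x : H,
        (∫⁻ u : unitary (H →L[ℂ] H), A.indicator (fun _ => (1 : ENNReal))
            ((u : H →L[ℂ] H) x) ∂μ)
          = μ {u : unitary (H →L[ℂ] H) | (u : H →L[ℂ] H) x ∈ A} := fun x => by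
      rw [lintegral_indicator_const_comp (hφcont x).measurable hA, one_mul]
      rfl
    have hae : ∀ᵐ x ∂ν, ‖x‖ = 1 := by
      rw [MeasureTheory.ae_iff]
      exact hsupp
    have step5 :
        (∫⁻ x, μ {u : unitary (H →L[ℂ] H) | (u : H →L[ℂ] H) x ∈ A} ∂ν)
          = ∫⁻ _ : H, μ {u : unitary (H →L[ℂ] H) | (u : H →L[ℂ] H) y ∈ A} ∂ν := by
      refine lintegral_congr_ae ?_
      filter_upwards [hae] with x hx
      exact hsame A hA x y hx hy
    calc ν A = ∫⁻ u : unitary (H →L[ℂ] H), ν ((u : H →L[ℂ] H) ⁻¹' A) ∂μ := step1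
      _ = ∫⁻ u : unitary (H →L[ℂ] H), ∫⁻ x, A.indicator (fun _ => (1 : ENNReal))
            ((u : H →L[ℂ] H) x) ∂ν ∂μ := lintegral_congr step2
      _ = ∫⁻ x, ∫⁻ u : unitary (H →L[ℂ] H), A.indicator (fun _ => (1 : ENNReal))
            ((u : H →L[ℂ] H) x) ∂μ ∂ν := lintegral_lintegral_swap hmf.aemeasurable
      _ = ∫⁻ x, μ {u : unitary (H →L[ℂ] H) | (u : H →L[ℂ] H) x ∈ A} ∂ν :=
            lintegral_congr step4
      _ = ∫⁻ _ : H, μ {u : unitary (H →L[ℂ] H) | (u : H →L[ℂ] H) y ∈ A} ∂ν := step5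
      _ = μ {u : unitary (H →L[ℂ] H) | (u : H →L[ℂ] H) y ∈ A} := by
            rw [lintegral_const, measure_univ, mul_one]
  -- union bound
  set A : Set H := {x : H | ‖x‖ = 1} \ B with hAdef
  have hSmeas : MeasurableSet {x : H | ‖x‖ = 1} :=
    (isClosed_eq continuous_norm continuous_const).measurableSet
  have hA : MeasurableSet A := hSmeas.diff hB
  set b := stdOrthonormalBasis ℂ H with hb
  have hbnorm : ∀ i, ‖b i‖ = 1 := fun i => b.orthonormal.1 i
  set T : Fin (Module.finrank ℂ H) → Set (unitary (H →L[ℂ] H)) :=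
    fun i => {u : unitary (H →L[ℂ] H) | (u : H →L[ℂ] H) (b i) ∈ A} with hT
  have hμT : ∀ i, μ (T i) = ν A := fun i => hkey A hA (b i) (hbnorm i)
  have hbound : μ (⋃ i, T i) < 1 := by
    calc μ (⋃ i, T i) ≤ ∑' i, μ (T i) := measure_iUnion_le T
      _ = ∑ i, μ (T i) := tsum_fintype _
      _ = (Module.finrank ℂ H : ENNReal) * ν A := by
          simp [hμT, Finset.sum_const, nsmul_eq_mul]
      _ < 1 := h
  have hne : (⋃ i, T i) ≠ Set.univ := by
    intro hcontr
    rw [hcontr, measure_univ] at hbound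
    exact lt_irrefl _ hbound
  obtain ⟨u, hu⟩ := (Set.ne_univ_iff_exists_notMem _).mp hne
  have hu' : ∀ i, (u : H →L[ℂ] H) (b i) ∉ A := by
    intro i hi
    exact hu (Set.mem_iUnion.mpr ⟨i, hi⟩)
  refine ⟨fun i => (u : H →L[ℂ] H) (b i), ?_, ?_⟩
  · intro i
    have hn : ‖(u : H →L[ℂ] H) (b i)‖ = 1 := by
      rw [Unitary.norm_map]; exact hbnorm i
    by_contra hnb
    exact hu' i ⟨hn, hnb⟩
  · constructor
    · intro i
      rw [Unitary.norm_map]; exact hbnorm i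
    · intro i j hij
      rw [Unitary.inner_map_map]
      exact b.orthonormal.2 hij
end

section
/- Let H be a complex Hilbert space and let p, q be orthogonal projections with equal finite rank. Then there exists a unitary u on H with u p u* = q and ‖(1 − u)p‖₂ ≤ √2 · ‖p − q‖₂. -/
open scoped InnerProductSpace
noncomputable section

set_option linter.unusedSectionVars false

local notation "⟪" x ", " y "⟫" => @inner ℂ _ _ x y

namespace HSAux

variable {H : Type*} [NormedAddCommGroup H] [InnerProductSpace ℂ H] [CompleteSpace H]

lemma sa_inner {p : H →L[ℂ] H} (hp : IsSelfAdjoint p) (x y : H) : ⟪p x, y⟫ = ⟪x, p y⟫ := by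
  have h : ContinuousLinearMap.adjoint p = p := by
    rw [← ContinuousLinearMap.star_eq_adjoint]; exact hp
  conv_lhs => rw [← h]
  exact ContinuousLinearMap.adjoint_inner_left _ _ _

lemma proj_fix {p : H →L[ℂ] H} (hp2 : IsIdempotentElem p) {x : H}
    (hx : x ∈ LinearMap.range (p : H →ₗ[ℂ] H)) : p x = x := by
  obtain ⟨y, rfl⟩ := hx
  calc p (p y) = (p * p) y := rfl
  _ = p y := by rw [hp2]

lemma proj_orth {p : H →L[ℂ] H} (hp : IsSelfAdjoint p) {x : H}
    (hx : x ∈ (LinearMap.range (p : H →ₗ[ℂ] H))ᗮ) : p x = 0 := by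
  have h0 : ⟪p (p x), x⟫ = 0 :=
    (Submodule.mem_orthogonal _ _).1 hx _ (LinearMap.mem_range_self _ _)
  have : ⟪p x, p x⟫ = 0 := by
    rw [sa_inner hp, ← inner_conj_symm, h0, map_zero]
  simpa [inner_self_eq_zero] using this

/-- key tsum lemma: HS-type sums over a Hilbert basis reduce to a finite orthonormal family. -/
lemma key {ι : Type*} (b : HilbertBasis ι ℂ H) {n : ℕ} (e : Fin n → H)
    (S T : H →L[ℂ] H)
    (hS : ∀ x, S x = ∑ j, ⟪e j, x⟫ • S (e j)) :
    Summable (fun i => ⟪S (b i), T (b i)⟫) ∧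
      ∑' i, ⟪S (b i), T (b i)⟫ = ∑ j, ⟪S (e j), T (e j)⟫ := by
  have hterm : ∀ i, ⟪S (b i), T (b i)⟫
      = ∑ j, ⟪(ContinuousLinearMap.adjoint T) (S (e j)), b i⟫ * ⟪b i, e j⟫ := by
    intro i
    conv_lhs => rw [hS (b i), sum_inner]
    refine Finset.sum_congr rfl fun j _ => ?_
    rw [inner_smul_left, ContinuousLinearMap.adjoint_inner_left, inner_conj_symm]
    ring
  have hsumj : ∀ j : Fin n,
      Summable (fun i => ⟪(ContinuousLinearMap.adjoint T) (S (e j)), b i⟫ * ⟪b i, e j⟫) :=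
    fun j => b.summable_inner_mul_inner _ _
  constructor
  · rw [show (fun i => ⟪S (b i), T (b i)⟫) = fun i => ∑ j, ⟪(ContinuousLinearMap.adjoint T) (S (e j)), b i⟫ * ⟪b i, e j⟫ from funext hterm]
    exact summable_sum fun j _ => hsumj j
  · rw [tsum_congr hterm, Summable.tsum_finsetSum (fun j _ => hsumj j)]
    refine Finset.sum_congr rfl fun j _ => ?_
    rw [b.tsum_inner_mul_inner, ContinuousLinearMap.adjoint_inner_left]


lemma keyR {ι : Type*} (b : HilbertBasis ι ℂ H) {n : ℕ} (e : Fin n → H)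
    (S : H →L[ℂ] H)
    (hS : ∀ x, S x = ∑ j, ⟪e j, x⟫ • S (e j)) :
    Summable (fun i => ‖S (b i)‖ ^ 2) ∧
      ∑' i, ‖S (b i)‖ ^ 2 = ∑ j, ‖S (e j)‖ ^ 2 := by
  obtain ⟨hsum, htsum⟩ := key b e S S hS
  have h1 : ∀ y : H, ⟪y, y⟫ = ((‖y‖ ^ 2 : ℝ) : ℂ) := fun y => by
    rw [inner_self_eq_norm_sq_to_K]; norm_cast
  simp only [h1] at hsum htsum
  have hs : Summable (fun i => ‖S (b i)‖ ^ 2) := Complex.summable_ofReal.mp hsum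
  refine ⟨hs, ?_⟩
  have h2 : ((∑' i, ‖S (b i)‖ ^ 2 : ℝ) : ℂ) = ((∑ j, ‖S (e j)‖ ^ 2 : ℝ) : ℂ) := by
    rw [Complex.ofReal_tsum, htsum]; push_cast; rfl
  exact_mod_cast h2

lemma keyRe {ι : Type*} (b : HilbertBasis ι ℂ H) {n : ℕ} (e : Fin n → H)
    (S T : H →L[ℂ] H)
    (hS : ∀ x, S x = ∑ j, ⟪e j, x⟫ • S (e j)) :
    Summable (fun i => Complex.re ⟪S (b i), T (b i)⟫) ∧
      ∑' i, Complex.re ⟪S (b i), T (b i)⟫ = Complex.re (∑ j, ⟪S (e j), T (e j)⟫) := by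
  obtain ⟨hsum, htsum⟩ := key b e S T hS
  have hs : Summable (fun i => Complex.re ⟪S (b i), T (b i)⟫) :=
    hsum.map Complex.reCLM.toLinearMap.toAddMonoidHom Complex.continuous_re
  refine ⟨hs, ?_⟩
  have := Complex.reCLM.map_tsum hsum
  simpa [htsum] using this.symm


lemma coe_onb_orthonormal {K : Submodule ℂ H} {n : ℕ} (c : OrthonormalBasis (Fin n) ℂ ↥K) :
    ∀ j k, ⟪(c j : H), (c k : H)⟫ = if j = k then 1 else 0 := by
  intro j k
  have := orthonormal_iff_ite.mp c.orthonormal j k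
  rwa [Submodule.coe_inner] at this

lemma expand {r : H →L[ℂ] H} (hr : IsSelfAdjoint r) (hr2 : IsIdempotentElem r)
    {n : ℕ} (c : OrthonormalBasis (Fin n) ℂ ↥(LinearMap.range (r : H →ₗ[ℂ] H))) (x : H) :
    r x = ∑ j, ⟪(c j : H), x⟫ • (c j : H) := by
  set y := x - ∑ j, ⟪(c j : H), x⟫ • (c j : H) with hy
  have hoc := coe_onb_orthonormal c
  have hcy : ∀ j, ⟪(c j : H), y⟫ = 0 := by
    intro j
    rw [hy, inner_sub_right, inner_sum]
    simp [inner_smul_right, hoc]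
  have hy_orth : y ∈ (LinearMap.range (r : H →ₗ[ℂ] H))ᗮ := by
    rw [Submodule.mem_orthogonal]
    intro z hz
    have hz2 : (⟨z, hz⟩ : ↥(LinearMap.range (r : H →ₗ[ℂ] H))) = ∑ j, c.repr ⟨z, hz⟩ j • c j :=
      (c.sum_repr ⟨z, hz⟩).symm
    have hz3 : z = ∑ j, c.repr ⟨z, hz⟩ j • (c j : H) := by
      have := congrArg (Subtype.val) hz2
      simpa using this
    rw [hz3, sum_inner]
    exact Finset.sum_eq_zero fun j _ => by rw [inner_smul_left, hcy j, mul_zero]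
  have h1 : r y = 0 := proj_orth hr hy_orth
  have h2 : x = (∑ j, ⟪(c j : H), x⟫ • (c j : H)) + y := by rw [hy]; abel
  conv_lhs => rw [h2]
  rw [map_add, h1, add_zero, map_sum]
  exact Finset.sum_congr rfl fun j _ => by rw [map_smul, proj_fix hr2 (c j).2]


lemma inner_coe_right (V : Submodule ℂ H) [CompleteSpace ↥V] (w : ↥V) (y : H) :
    ⟪(w : H), y⟫ = ⟪w, Submodule.orthogonalProjectionOnto V y⟫ := by
  have h0 : ⟪(w : H), y - ↑(Submodule.orthogonalProjectionOnto V y)⟫ = 0 :=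
    (Submodule.mem_orthogonal _ _).1 (Submodule.sub_starProjection_mem_orthogonal (K := V) y) _ w.2
  have : ⟪(w : H), y⟫ = ⟪(w : H), ((Submodule.orthogonalProjectionOnto V y : ↥V) : H)⟫ := by
    have := inner_sub_right (𝕜 := ℂ) (w : H) y ((Submodule.orthogonalProjectionOnto V y : ↥V) : H)
    rw [h0] at this
    exact sub_eq_zero.1 this.symm
  rw [this, Submodule.coe_inner]

lemma inner_coe_left (V : Submodule ℂ H) [CompleteSpace ↥V] (w : ↥V) (y : H) :
    ⟪y, (w : H)⟫ = ⟪Submodule.orthogonalProjectionOnto V y, w⟫ := by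
  rw [← inner_conj_symm, inner_coe_right, inner_conj_symm]

lemma exists_unitary_ext (V : Submodule ℂ H) [FiniteDimensional ℂ ↥V]
    (ψ : ↥V ≃ₗᵢ[ℂ] ↥V) :
    ∃ u : H →L[ℂ] H, u ∈ unitary (H →L[ℂ] H) ∧ ∀ x : ↥V, u ↑x = ↑(ψ x) := by
  set P : H →L[ℂ] H := V.subtypeL ∘L Submodule.orthogonalProjectionOnto V with hPdef
  set A : H →L[ℂ] H :=
    V.subtypeL ∘L (ψ.toLinearIsometry.toContinuousLinearMap ∘L Submodule.orthogonalProjectionOnto V) with hAdef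
  set A' : H →L[ℂ] H :=
    V.subtypeL ∘L (ψ.symm.toLinearIsometry.toContinuousLinearMap ∘L Submodule.orthogonalProjectionOnto V)
    with hA'def
  have hproj : ∀ x : ↥V, Submodule.orthogonalProjectionOnto V (x : H) = x :=
    fun x => Submodule.orthogonalProjectionOnto_mem_subspace_eq_self x
  have hAx : ∀ x, A x = ↑(ψ (Submodule.orthogonalProjectionOnto V x)) := fun x => rfl
  have hA'x : ∀ x, A' x = ↑(ψ.symm (Submodule.orthogonalProjectionOnto V x)) := fun x => rfl
  have hPx : ∀ x, P x = ↑(Submodule.orthogonalProjectionOnto V x) := fun x => rfl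
  have hAA' : A * A' = P := by
    ext x; simp [ContinuousLinearMap.mul_apply, hAx, hA'x, hPx, hproj]
  have hA'A : A' * A = P := by
    ext x; simp [ContinuousLinearMap.mul_apply, hAx, hA'x, hPx, hproj]
  have hAP : A * P = A := by
    ext x; simp [ContinuousLinearMap.mul_apply, hAx, hPx, hproj,
      Submodule.orthogonalProjectionOnto_starProjection_of_le (le_refl V)]
  have hPA : P * A = A := by
    ext x; simp [ContinuousLinearMap.mul_apply, hAx, hPx, hproj]
  have hA'P : A' * P = A' := by
    ext x; simp [ContinuousLinearMap.mul_apply, hA'x, hPx, hproj,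
      Submodule.orthogonalProjectionOnto_starProjection_of_le (le_refl V)]
  have hPA' : P * A' = A' := by
    ext x; simp [ContinuousLinearMap.mul_apply, hA'x, hPx, hproj]
  have hPP : P * P = P := by
    ext x; simp [ContinuousLinearMap.mul_apply, hPx, hproj, Submodule.starProjection_eq_self_iff,
      Submodule.starProjection_apply_mem]
  have hadj : ContinuousLinearMap.adjoint A = A' := by
    symm
    rw [ContinuousLinearMap.eq_adjoint_iff]
    intro x y
    rw [hA'x, hAx, inner_coe_right, inner_coe_left]
    calc ⟪ψ.symm (Submodule.orthogonalProjectionOnto V x), Submodule.orthogonalProjectionOnto V y⟫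
        = ⟪ψ (ψ.symm (Submodule.orthogonalProjectionOnto V x)), ψ (Submodule.orthogonalProjectionOnto V y)⟫ :=
          (ψ.inner_map_map _ _).symm
      _ = ⟪Submodule.orthogonalProjectionOnto V x, ψ (Submodule.orthogonalProjectionOnto V y)⟫ := by
          rw [ψ.apply_symm_apply]
  have hPsa : star P = P := isSelfAdjoint_starProjection V
  set u : H →L[ℂ] H := A + 1 - P with hudef
  have hstar : star u = A' + 1 - P := by
    rw [hudef, star_sub, star_add, star_one, ContinuousLinearMap.star_eq_adjoint, hadj, hPsa]
  have h1 : star u * u = 1 := by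
    rw [hstar, hudef]
    simp only [mul_sub, sub_mul, mul_add, add_mul, mul_one, one_mul, hA'A, hA'P, hPA, hPP]
    abel
  have h2 : u * star u = 1 := by
    rw [hstar, hudef]
    simp only [mul_sub, sub_mul, mul_add, add_mul, mul_one, one_mul, hAA', hAP, hPA', hPP]
    abel
  refine ⟨u, Unitary.mem_iff.2 ⟨h1, h2⟩, fun x => ?_⟩
  rw [hudef]
  simp [hAx, hPx, hproj]

lemma exists_unitary_map_orthonormal {n : ℕ} {e f : Fin n → H}
    (he : Orthonormal ℂ e) (hf : Orthonormal ℂ f) :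
    ∃ u : H →L[ℂ] H, u ∈ unitary (H →L[ℂ] H) ∧ ∀ j, u (e j) = f j := by
  set V := Submodule.span ℂ (Set.range e ∪ Set.range f) with hV
  haveI : FiniteDimensional ℂ ↥V :=
    FiniteDimensional.span_of_finite ℂ ((Set.finite_range e).union (Set.finite_range f))
  have hme : ∀ j, e j ∈ V := fun j =>
    Submodule.subset_span (Set.mem_union_left _ (Set.mem_range_self j))
  have hmf : ∀ j, f j ∈ V := fun j =>
    Submodule.subset_span (Set.mem_union_right _ (Set.mem_range_self j))
  set m := Module.finrank ℂ ↥V with hm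
  have hnm : n ≤ m := by
    have h1 : Submodule.span ℂ (Set.range e) ≤ V := Submodule.span_mono Set.subset_union_left
    have h2 : Module.finrank ℂ ↥(Submodule.span ℂ (Set.range e)) = n := by
      rw [finrank_span_eq_card he.linearIndependent, Fintype.card_fin]
    calc n = Module.finrank ℂ ↥(Submodule.span ℂ (Set.range e)) := h2.symm
      _ ≤ m := Submodule.finrank_mono h1
  -- extend e to an ONB of V
  have hcard : Module.finrank ℂ ↥V = Fintype.card (Fin m) := by simp [hm]
  have hext : ∀ (g : Fin n → H), Orthonormal ℂ g → (∀ j, g j ∈ V) →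
      ∃ gB : OrthonormalBasis (Fin m) ℂ ↥V,
        ∀ j : Fin n, (gB ⟨j, lt_of_lt_of_le j.isLt hnm⟩ : H) = g j := by
    intro g hg hgV
    set s : Set (Fin m) := {k | (k : ℕ) < n} with hs
    set gV : Fin m → ↥V := fun k => if h : (k : ℕ) < n then ⟨g ⟨k, h⟩, hgV _⟩ else 0 with hgv
    have hON : Orthonormal ℂ (s.restrict gV) := by
      rw [orthonormal_iff_ite]
      rintro ⟨j, hj⟩ ⟨k, hk⟩
      have hj' : (j : ℕ) < n := hj
      have hk' : (k : ℕ) < n := hk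
      have : ⟪gV j, gV k⟫ = ⟪g ⟨j, hj'⟩, g ⟨k, hk'⟩⟫ := by
        rw [hgv]; simp only [dif_pos hj', dif_pos hk']; rw [Submodule.coe_inner]
      rw [show s.restrict gV ⟨j, hj⟩ = gV j from rfl, show s.restrict gV ⟨k, hk⟩ = gV k from rfl, this, orthonormal_iff_ite.1 hg]
      congr 1
      simp [Fin.ext_iff, Subtype.ext_iff]
    obtain ⟨gB, hgB⟩ := hON.exists_orthonormalBasis_extension_of_card_eq hcard
    refine ⟨gB, fun j => ?_⟩
    have hmem : (⟨j, lt_of_lt_of_le j.isLt hnm⟩ : Fin m) ∈ s := j.isLt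
    rw [hgB _ hmem, hgv]
    simp
  obtain ⟨gE, hgE⟩ := hext e he hme
  obtain ⟨gF, hgF⟩ := hext f hf hmf
  set ψ : ↥V ≃ₗᵢ[ℂ] ↥V := gE.repr.trans gF.repr.symm with hψ
  have hψg : ∀ k, ψ (gE k) = gF k := by
    intro k
    rw [hψ]
    simp [LinearIsometryEquiv.trans_apply, OrthonormalBasis.repr_self,
      OrthonormalBasis.repr_symm_single]
  obtain ⟨u, hu, hux⟩ := exists_unitary_ext V ψ
  refine ⟨u, hu, fun j => ?_⟩
  have h1 : u (e j) = ↑(ψ ⟨e j, hme j⟩) := hux ⟨e j, hme j⟩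
  have h2 : gE ⟨j, lt_of_lt_of_le j.isLt hnm⟩ = ⟨e j, hme j⟩ := Subtype.ext (hgE j)
  rw [h1, ← h2, hψg, hgF j]


end HSAux

open HSAux in
theorem exists_unitary_conj_eq_of_equal_finite_rank
    {H : Type*} [NormedAddCommGroup H] [InnerProductSpace ℂ H] [CompleteSpace H]
    {ι : Type*} (b : HilbertBasis ι ℂ H)
    (p q : H →L[ℂ] H)
    (hp : IsSelfAdjoint p) (hp2 : IsIdempotentElem p)
    (hq : IsSelfAdjoint q) (hq2 : IsIdempotentElem q)
    (hfp : FiniteDimensional ℂ (LinearMap.range (p : H →ₗ[ℂ] H)))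
    (hfq : FiniteDimensional ℂ (LinearMap.range (q : H →ₗ[ℂ] H)))
    (hrk : Module.finrank ℂ (LinearMap.range (p : H →ₗ[ℂ] H)) = Module.finrank ℂ (LinearMap.range (q : H →ₗ[ℂ] H))) :
    ∃ u : H →L[ℂ] H, u ∈ unitary (H →L[ℂ] H) ∧ u * p * star u = q ∧
      Real.sqrt (∑' i, ‖((1 - u) * p) (b i)‖ ^ 2) ≤
        Real.sqrt 2 * Real.sqrt (∑' i, ‖(p - q) (b i)‖ ^ 2) := by
  classical
  set E := LinearMap.range (p : H →ₗ[ℂ] H) with hE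
  set F := LinearMap.range (q : H →ₗ[ℂ] H) with hF
  set n := Module.finrank ℂ ↥E with hn
  -- the symmetric operator x ↦ p (q x) on E
  set A : ↥E →ₗ[ℂ] ↥E :=
    LinearMap.codRestrict E (((p ∘L q) : H →L[ℂ] H).toLinearMap.comp E.subtype)
      (fun x => LinearMap.mem_range_self _ _) with hAdef
  have hAapp : ∀ x : ↥E, (A x : H) = p (q (x : H)) := fun x => rfl
  have hfixE : ∀ x : ↥E, p (x : H) = (x : H) := fun x => proj_fix hp2 x.2
  have hfixF : ∀ x : ↥F, q (x : H) = (x : H) := fun x => proj_fix hq2 x.2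
  have hA : A.IsSymmetric := by
    intro x y
    rw [Submodule.coe_inner, Submodule.coe_inner, hAapp, hAapp]
    calc ⟪p (q (x : H)), (y : H)⟫ = ⟪q (x : H), p (y : H)⟫ := sa_inner hp _ _
      _ = ⟪q (x : H), (y : H)⟫ := by rw [hfixE y]
      _ = ⟪(x : H), q (y : H)⟫ := sa_inner hq _ _
      _ = ⟪p (x : H), q (y : H)⟫ := by rw [hfixE x]
      _ = ⟪(x : H), p (q (y : H))⟫ := sa_inner hp _ _
  have hn' : Module.finrank ℂ ↥E = n := rfl
  set eB := hA.eigenvectorBasis hn' with heB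
  set μ : Fin n → ℝ := hA.eigenvalues hn' with hμdef
  set e : Fin n → H := fun j => ↑(eB j) with hedef
  have he : Orthonormal ℂ e := by
    rw [orthonormal_iff_ite]
    intro j k
    have h := orthonormal_iff_ite.1 eB.orthonormal j k
    rwa [Submodule.coe_inner] at h
  have hpe : ∀ j, p (e j) = e j := fun j => proj_fix hp2 (eB j).2
  have hpqe : ∀ j, p (q (e j)) = ((μ j : ℝ) : ℂ) • e j := by
    intro j
    have h := hA.apply_eigenvectorBasis hn' j
    have h2 := congrArg Subtype.val h
    rw [hAapp] at h2
    simpa [hedef] using h2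
  have hqq : ∀ j k, ⟪e j, q (e k)⟫ = if j = k then ((μ k : ℝ) : ℂ) else 0 := by
    intro j k
    calc ⟪e j, q (e k)⟫ = ⟪p (e j), q (e k)⟫ := by rw [hpe]
      _ = ⟪e j, p (q (e k))⟫ := sa_inner hp _ _
      _ = ((μ k : ℝ) : ℂ) * ⟪e j, e k⟫ := by rw [hpqe k, inner_smul_right]
      _ = _ := by rw [orthonormal_iff_ite.1 he]; split <;> simp
  have hqidem : ∀ x, q (q x) = q x := by
    intro x
    calc q (q x) = (q * q) x := rfl
      _ = q x := by rw [hq2]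
  have hqnorm : ∀ j, ‖q (e j)‖ ^ 2 = μ j := by
    intro j
    have h1 : ⟪q (e j), q (e j)⟫ = ((μ j : ℝ) : ℂ) := by
      rw [sa_inner hq, hqidem]
      simpa using hqq j j
    rw [inner_self_eq_norm_sq_to_K (𝕜 := ℂ)] at h1
    exact Complex.ofReal_inj.mp (by push_cast; exact h1)
  have hμ0 : ∀ j, 0 ≤ μ j := fun j => (hqnorm j) ▸ sq_nonneg _
  have hsqrtμ : ∀ j, Real.sqrt (μ j) = ‖q (e j)‖ := fun j => by
    rw [← hqnorm j, Real.sqrt_sq (norm_nonneg _)]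
  have hμle : ∀ j, μ j ≤ Real.sqrt (μ j) := by
    intro j
    have h1 : μ j = Complex.re ⟪e j, q (e j)⟫ := by
      have := hqq j j; simp at this; rw [this]; simp
    have h2 : Complex.re ⟪e j, q (e j)⟫ ≤ ‖⟪e j, q (e j)⟫‖ := Complex.re_le_norm _
    have h3 : ‖⟪e j, q (e j)⟫‖ ≤ ‖e j‖ * ‖q (e j)‖ := norm_inner_le_norm _ _
    have h4 : ‖e j‖ = 1 := he.1 j
    rw [hsqrtμ j, h1]
    calc Complex.re ⟪e j, q (e j)⟫ ≤ ‖e j‖ * ‖q (e j)‖ := le_trans h2 h3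
      _ = ‖q (e j)‖ := by rw [h4, one_mul]
  have hμ1 : ∀ j, μ j ≤ 1 := by
    intro j
    have h1 := hμle j
    have h2 := hsqrtμ j
    have h3 := hqnorm j
    have h4 : (0:ℝ) ≤ ‖q (e j)‖ := norm_nonneg _
    nlinarith [h3 ▸ h1]
  -- construct the orthonormal family f in range q
  have hcardF : Module.finrank ℂ ↥F = Fintype.card (Fin n) := by
    rw [Fintype.card_fin, hn, hE, hF]; exact hrk.symm
  set v : Fin n → ↥F := fun j =>
    if h : μ j = 0 then 0
    else ⟨((Real.sqrt (μ j) : ℝ) : ℂ)⁻¹ • q (e j),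
      Submodule.smul_mem _ _ (LinearMap.mem_range_self _ _)⟩ with hvdef
  have hqee : ∀ j k, ⟪q (e j), q (e k)⟫ = if j = k then ((μ k : ℝ) : ℂ) else 0 := by
    intro j k
    rw [sa_inner hq, hqidem]
    exact hqq j k
  have hON : Orthonormal ℂ (Set.restrict {j | ¬ μ j = 0} v) := by
    rw [orthonormal_iff_ite]
    rintro ⟨j, hj⟩ ⟨k, hk⟩
    have hj' : ¬ μ j = 0 := hj
    have hk' : ¬ μ k = 0 := hk
    have hinner : ⟪v j, v k⟫ =
        (((Real.sqrt (μ j) : ℝ) : ℂ))⁻¹ * (((Real.sqrt (μ k) : ℝ) : ℂ))⁻¹ *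
          ⟪q (e j), q (e k)⟫ := by
      rw [hvdef]
      simp only [dif_neg hj', dif_neg hk']
      rw [Submodule.coe_inner]
      simp only [inner_smul_left, inner_smul_right]
      rw [map_inv₀, Complex.conj_ofReal]
      ring
    show ⟪v j, v k⟫ = _
    rw [hinner, hqee j k]
    by_cases hjk : j = k
    · subst hjk
      rw [if_pos rfl, if_pos rfl]
      have hs : Real.sqrt (μ j) ≠ 0 := by
        rw [Real.sqrt_ne_zero']
        exact lt_of_le_of_ne (hμ0 j) (Ne.symm hj')
      have h3 : ((Real.sqrt (μ j) : ℝ) : ℂ) ≠ 0 := by exact_mod_cast hs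
      have h2 : ((Real.sqrt (μ j) : ℝ) : ℂ) * ((Real.sqrt (μ j) : ℝ) : ℂ)
          = ((μ j : ℝ) : ℂ) := by
        norm_cast
        exact Real.mul_self_sqrt (hμ0 j)
      rw [← h2]
      field_simp
    · have : ¬ ((⟨j, hj⟩ : {j | ¬ μ j = 0}) = ⟨k, hk⟩) := by
        simp [Subtype.ext_iff, hjk]
      rw [if_neg hjk, if_neg this, mul_zero]
  obtain ⟨fB, hfB⟩ := hON.exists_orthonormalBasis_extension_of_card_eq hcardF
  set f : Fin n → H := fun j => ↑(fB j) with hfdef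
  have hf : Orthonormal ℂ f := by
    rw [orthonormal_iff_ite]
    intro j k
    have h := orthonormal_iff_ite.1 fB.orthonormal j k
    rwa [Submodule.coe_inner] at h
  have hqf : ∀ j, q (f j) = f j := fun j => proj_fix hq2 (fB j).2
  have hef : ∀ j, ⟪e j, f j⟫ = ((Real.sqrt (μ j) : ℝ) : ℂ) := by
    intro j
    by_cases h : μ j = 0
    · have hq0 : q (e j) = 0 := by
        have h1 : ‖q (e j)‖ ^ 2 = 0 := by rw [hqnorm j, h]
        simpa using h1
      have h2 : ⟪e j, f j⟫ = ⟪q (e j), f j⟫ := by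
        conv_lhs => rw [← hqf j]
        rw [sa_inner hq]
      rw [h2, hq0, h]
      simp
    · have hfj : fB j = v j := hfB j h
      have h1 : f j = (((Real.sqrt (μ j) : ℝ) : ℂ))⁻¹ • q (e j) := by
        rw [hfdef]
        simp only [hfj, hvdef, dif_neg h]
      rw [h1, inner_smul_right]
      have h2 : ⟪e j, q (e j)⟫ = ((μ j : ℝ) : ℂ) := by simpa using hqq j j
      rw [h2, ← Complex.ofReal_inv, ← Complex.ofReal_mul]
      congr 1
      rw [inv_mul_eq_div, Real.div_sqrt]
  -- the unitary
  obtain ⟨u, huU, hue⟩ := exists_unitary_map_orthonormal he hf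
  have hp_exp : ∀ x, p x = ∑ j, ⟪e j, x⟫ • e j := fun x => expand hp hp2 eB x
  have hq_exp : ∀ x, q x = ∑ j, ⟪f j, x⟫ • f j := fun x => expand hq hq2 fB x
  have hconj : u * p * star u = q := by
    ext x
    have h1 : (u * p * star u) x = u (p ((star u) x)) := rfl
    have h2 : ∀ j, ⟪e j, (star u) x⟫ = ⟪f j, x⟫ := by
      intro j
      rw [ContinuousLinearMap.star_eq_adjoint, ContinuousLinearMap.adjoint_inner_right, hue j]
    rw [h1, hp_exp ((star u) x), map_sum, hq_exp x]
    exact Finset.sum_congr rfl fun j _ => by rw [map_smul, h2 j, hue j]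
  refine ⟨u, huU, hconj, ?_⟩
  -- LHS
  have hS1 : ∀ x, ((1 - u) * p) x = ∑ j, ⟪e j, x⟫ • ((1 - u) * p) (e j) := by
    intro x
    have h0 : ((1 - u) * p) x = (1 - u) (p x) := rfl
    rw [h0, hp_exp x, map_sum]
    refine Finset.sum_congr rfl fun j _ => ?_
    rw [map_smul]
    congr 1
    show (1 - u) (e j) = ((1 - u) * p) (e j)
    rw [ContinuousLinearMap.mul_apply, hpe j]
  obtain ⟨hLsum, hLtsum⟩ := keyR b e _ hS1
  have hLval : ∀ j, ‖((1 - u) * p) (e j)‖ ^ 2 = 2 - 2 * Real.sqrt (μ j) := by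
    intro j
    have h1 : ((1 - u) * p) (e j) = e j - f j := by
      rw [ContinuousLinearMap.mul_apply, hpe j, ContinuousLinearMap.sub_apply,
        ContinuousLinearMap.one_apply, hue j]
    rw [h1, norm_sub_sq (𝕜 := ℂ), hef j]
    simp only [he.1 j, hf.1 j, Complex.ofReal_re, RCLike.re_to_complex]
    ring
  -- RHS pieces
  have hSp : ∀ x, p x = ∑ j, ⟪e j, x⟫ • p (e j) := by
    intro x
    rw [hp_exp x]
    exact Finset.sum_congr rfl fun j _ => by rw [hpe j]
  have hSq : ∀ x, q x = ∑ j, ⟪f j, x⟫ • q (f j) := by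
    intro x
    rw [hq_exp x]
    exact Finset.sum_congr rfl fun j _ => by rw [hqf j]
  obtain ⟨hPsum, hPtsum⟩ := keyR b e p hSp
  obtain ⟨hQsum, hQtsum⟩ := keyR b f q hSq
  obtain ⟨hXsum, hXtsum⟩ := keyRe b e p q hSp
  have hPval : ∑ j, ‖p (e j)‖ ^ 2 = (n : ℝ) := by
    rw [Finset.sum_congr rfl fun j _ => by rw [hpe j, he.1 j]]
    simp
  have hQval : ∑ j, ‖q (f j)‖ ^ 2 = (n : ℝ) := by
    rw [Finset.sum_congr rfl fun j _ => by rw [hqf j, hf.1 j]]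
    simp
  have hXval : Complex.re (∑ j, ⟪p (e j), q (e j)⟫) = ∑ j, μ j := by
    have h1 : ∀ j, ⟪p (e j), q (e j)⟫ = ((μ j : ℝ) : ℂ) := by
      intro j
      rw [hpe j]
      simpa using hqq j j
    rw [Finset.sum_congr rfl fun j _ => h1 j, ← Complex.ofReal_sum, Complex.ofReal_re]
  have hRpoint : ∀ x : H, ‖(p - q) x‖ ^ 2
      = ‖p x‖ ^ 2 + ‖q x‖ ^ 2 - 2 * Complex.re ⟪p x, q x⟫ := by
    intro x
    have h0 : (p - q) x = p x - q x := rfl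
    rw [h0, norm_sub_sq (𝕜 := ℂ)]
    simp only [RCLike.re_to_complex]
    ring
  have HR : ∑' i, ‖(p - q) (b i)‖ ^ 2 = (n : ℝ) + n - 2 * ∑ j, μ j := by
    rw [tsum_congr fun i => hRpoint (b i)]
    rw [Summable.tsum_sub (hPsum.add hQsum) (hXsum.mul_left 2)]
    rw [Summable.tsum_add hPsum hQsum, tsum_mul_left, hPtsum, hQtsum, hXtsum,
      hPval, hQval, hXval]
  have HL : ∑' i, ‖((1 - u) * p) (b i)‖ ^ 2 = ∑ j, (2 - 2 * Real.sqrt (μ j)) := by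
    rw [hLtsum]
    exact Finset.sum_congr rfl fun j _ => hLval j
  rw [HL, HR]
  have hRnn : (0:ℝ) ≤ (n : ℝ) + n - 2 * ∑ j, μ j := by
    have h1 : ∑ j, μ j ≤ ∑ j : Fin n, (1:ℝ) := Finset.sum_le_sum fun j _ => hμ1 j
    simp only [Finset.sum_const, Finset.card_univ, Fintype.card_fin, nsmul_eq_mul,
      smul_eq_mul, mul_one] at h1
    linarith
  have hmain : ∑ j, (2 - 2 * Real.sqrt (μ j)) ≤ 2 * ((n : ℝ) + n - 2 * ∑ j, μ j) := by
    have h1 : ∑ j, (2 - 2 * Real.sqrt (μ j)) ≤ ∑ j, (2 - 2 * μ j) :=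
      Finset.sum_le_sum fun j _ => by have := hμle j; linarith
    have h2 : ∑ j, (2 - 2 * μ j) = 2 * (n:ℝ) - 2 * ∑ j, μ j := by
      rw [Finset.sum_sub_distrib, ← Finset.mul_sum]
      simp
      ring
    linarith
  calc Real.sqrt (∑ j, (2 - 2 * Real.sqrt (μ j)))
      ≤ Real.sqrt (2 * ((n : ℝ) + n - 2 * ∑ j, μ j)) := Real.sqrt_le_sqrt hmain
    _ = Real.sqrt 2 * Real.sqrt ((n : ℝ) + n - 2 * ∑ j, μ j) := Real.sqrt_mul (by norm_num) _
end
end
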